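/- arXiv:2206.14656 — 6 statements merged into one kernel-verified Lean document; each statement's English description precedes it below -/
import Mathlib

section
/- Let ω_m > 0, λ > 0, and let the sampling interval satisfy 0 < T_s < π/ω_m (sampling above the Nyquist rate). Let g : ℝ → ℝ be injective on the interval [-λ, λ], and let G : ℝ → ℝ be a generalized amplitude-limiting operator with in-range response g. If f₁ and f₂ are both ω_m-bandlimited with finite energy and G(f₁(n T_s)) = G(f₂(n T_s)) for every n ∈ ℤ, then f₁ = f₂ (as functions on ℝ). -/
/-- `f : ℝ → ℝ` is `ωm`-bandlimited with finite energy: there is a square-integrable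
`F : ℝ → ℂ` vanishing a.e. outside `[-ωm, ωm]` with
`f t = (1/(2π)) ∫ F ω e^{iωt} dω` for all `t`. -/
def IsBandlimited (ωm : ℝ) (f : ℝ → ℝ) : Prop :=
  ∃ F : ℝ → ℂ,
    MeasureTheory.MemLp F 2 MeasureTheory.volume ∧
    (∀ᵐ ω : ℝ ∂MeasureTheory.volume, ω ∉ Set.Icc (-ωm) ωm → F ω = 0) ∧
    ∀ t : ℝ, (f t : ℂ) =
      (1 / (2 * Real.pi)) * ∫ ω : ℝ, F ω * Complex.exp (Complex.I * ω * t)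

/-- The modulo operation `M_λ(a) = ((a + λ) mod 2λ) − λ`, where `x mod 2λ` is the
unique element of `[0, 2λ)` congruent to `x` modulo `2λ`. -/
noncomputable def modOp (lam a : ℝ) : ℝ :=
  Int.fract ((a + lam) / (2 * lam)) * (2 * lam) - lam

/-- The normalized sinc function: `sinc x = sin (π x) / (π x)` for `x ≠ 0`, `sinc 0 = 1`. -/
noncomputable def sinc (x : ℝ) : ℝ :=
  if x = 0 then 1 else Real.sin (Real.pi * x) / (Real.pi * x)

/-! By the Riemann–Lebesgue lemma a bandlimited signal tends to `0` at infinity, so all but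
finitely many samples of `f₁` and `f₂` lie in `[-λ, λ]`, where `G` is injective: `f₁ - f₂` has
only finitely many nonzero samples. Because `Tₛ < π / ωₘ`, the spectrum `H` of `f₁ - f₂` is
supported inside one period `(-π / Tₛ, π / Tₛ]` of the Fourier series whose coefficients are these
samples, so on that period `H` agrees a.e. with a trigonometric polynomial. The polynomial is
real-analytic and vanishes on the guard band `(ωₘ, π / Tₛ)`, hence everywhere; so `H = 0` and
`f₁ = f₂`. -/

open MeasureTheory Filter Set Complex Real Topology AddCircle

theorem MeasureTheory.MemLp.integrable_of_ae_notMem_eq_zero {α E : Type*} [MeasurableSpace α]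
    {μ : Measure α} [NormedAddCommGroup E] {f : α → E} {p : ENNReal} {s : Set α}
    (hf : MemLp f p μ) (hp : 1 ≤ p) (hs : μ s ≠ ⊤) (h : ∀ᵐ x ∂μ, x ∉ s → f x = 0) :
    Integrable f μ :=
  have : IsFiniteMeasure (μ.restrict s) := isFiniteMeasure_restrict.2 hs
  IntegrableOn.integrable_of_ae_notMem_eq_zero ((hf.restrict s).integrable hp) h

theorem integrable_mul_cexp_I_mul {F : ℝ → ℂ} (hF : Integrable F) (t : ℝ) :
    Integrable fun ω : ℝ => F ω * cexp (I * ω * t) :=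
  hF.mul_bdd (by fun_prop) (c := 1) (Eventually.of_forall fun ω => by
    rw [mul_assoc, ← ofReal_mul, norm_exp_I_mul_ofReal])

theorem tendsto_integral_mul_cexp_I_mul_cocompact (F : ℝ → ℂ) :
    Tendsto (fun t : ℝ => ∫ ω, F ω * cexp (I * ω * t)) (cocompact ℝ) (𝓝 0) := by
  have h := (Real.tendsto_integral_exp_smul_cocompact F).comp
    (tendsto_cocompact_mul_right₀ (inv_ne_zero (neg_ne_zero.2 Real.two_pi_pos.ne')))
  refine h.congr fun t => integral_congr_ae (Eventually.of_forall fun ω => ?_)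
  simp only [Circle.smul_def, Real.fourierChar_apply, smul_eq_mul]
  rw [mul_comm]
  congr 2
  push_cast
  field_simp

theorem Set.InjOn.eventually_eq_of_tendsto {α β ι : Type*} [TopologicalSpace α] {G : α → β}
    {s : Set α} {a : α} (hG : InjOn G s) (hs : s ∈ 𝓝 a) {l : Filter ι} {x y : ι → α}
    (hx : Tendsto x l (𝓝 a)) (hy : Tendsto y l (𝓝 a)) (hxy : ∀ᶠ i in l, G (x i) = G (y i)) :
    ∀ᶠ i in l, x i = y i := by
  filter_upwards [hx hs, hy hs, hxy] with i hxi hyi hi using hG hxi hyi hi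

theorem AnalyticOnNhd.eq_zero_of_ae_eq_zero_on_Ioo {E : Type*} [NormedAddCommGroup E]
    [NormedSpace ℝ E] {f : ℝ → E} (hf : AnalyticOnNhd ℝ f univ) {a b : ℝ} (hab : a < b)
    (h : ∀ᵐ x ∂volume.restrict (Ioo a b), f x = 0) : f = 0 := by
  have hIoo : EqOn f 0 (Ioo a b) :=
    Measure.eqOn_Ioo_of_ae_eq _ h (hf.continuousOn.mono (subset_univ _)) continuousOn_const
  have hmid : f =ᶠ[𝓝 ((a + b) / 2)] 0 :=
    mem_of_superset (Ioo_mem_nhds (by linarith) (by linarith)) hIoo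
  exact funext fun x => hf.eqOn_zero_of_preconnected_of_eventuallyEq_zero isPreconnected_univ
    (mem_univ _) hmid (mem_univ x)

theorem ae_eq_sum_fourier_of_fourierCoeff_eq_zero {T : ℝ} [Fact (0 < T)] {f : AddCircle T → ℂ}
    (hf : MemLp f 2 haarAddCircle) {s : Finset ℤ} (hs : ∀ n ∉ s, fourierCoeff f n = 0) :
    f =ᵐ[haarAddCircle] ⇑(∑ n ∈ s, fourierCoeff f n • fourier n) := by
  have hsum := hasSum_fourier_series_L2 (hf.toLp f)
  rw [fourierCoeff_congr_ae hf.coeFn_toLp] at hsum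
  set P : C(AddCircle T, ℂ) := ∑ n ∈ s, fourierCoeff f n • fourier n
  have hLp : hf.toLp f = ContinuousMap.toLp (E := ℂ) 2 haarAddCircle ℂ P := by
    simp only [P, map_sum, _root_.map_smul]
    exact hsum.unique (hasSum_sum_of_ne_finset_zero fun n hn => by rw [hs n hn, zero_smul])
  filter_upwards [hf.coeFn_toLp, ContinuousMap.coeFn_toLp (𝕜 := ℂ) (p := 2) haarAddCircle P]
    with x hfx hPx
  rw [← hfx, hLp, hPx]

theorem ae_restrict_eq_sum_fourierCoeffOn_mul_cexp {a b : ℝ} (hab : a < b) {f : ℝ → ℂ}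
    (hf : MemLp f 2 (volume.restrict (Ioc a b))) {s : Finset ℤ}
    (hs : ∀ n ∉ s, fourierCoeffOn hab f n = 0) :
    f =ᵐ[volume.restrict (Ioc a b)]
      fun x => ∑ n ∈ s, fourierCoeffOn hab f n * cexp (2 * π * I * n * x / (b - a : ℝ)) := by
  have : Fact (0 < b - a) := ⟨sub_pos.2 hab⟩
  have hb : a + (b - a) = b := add_sub_cancel a b
  have hlift : MemLp (liftIoc (b - a) a f) 2 haarAddCircle :=
    (hb.symm ▸ hf : MemLp f 2 (volume.restrict (Ioc a (a + (b - a))))).memLp_liftIoc.haarAddCircle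
  have hcircle : liftIoc (b - a) a f =ᵐ[volume]
      ⇑(∑ n ∈ s, fourierCoeffOn hab f n • fourier (T := b - a) n) := by
    rw [volume_eq_smul_haarAddCircle]
    exact Measure.ae_smul_measure (ae_eq_sum_fourier_of_fourierCoeff_eq_zero hlift hs) _
  have hline := (AddCircle.measurePreserving_mk (b - a) a).quasiMeasurePreserving.ae_eq_comp
    hcircle
  rw [hb] at hline
  filter_upwards [hline, ae_restrict_mem measurableSet_Ioc] with x hx hxI
  rw [← hb] at hxI
  simp only [Function.comp_apply, liftIoc_coe_apply hxI] at hx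
  simp [hx, fourierCoeffOn]

theorem fourierCoeffOn_eq_integral_mul_cexp {a b : ℝ} (hab : a < b) {f : ℝ → ℂ}
    (hf : ∀ᵐ x, x ∉ Ioc a b → f x = 0) (n : ℤ) :
    fourierCoeffOn hab f n = (b - a)⁻¹ * ∫ x, f x * cexp (-(2 * π * I * n * x / (b - a : ℝ))) := by
  have hsupp : ∀ᵐ x, x ∉ Ioc a b → f x * cexp (-(2 * π * I * n * x / (b - a : ℝ))) = 0 := by
    filter_upwards [hf] with x hx hxI
    rw [hx hxI, zero_mul]
  rw [fourierCoeffOn_eq_integral, intervalIntegral.integral_of_le hab.le,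
    ← setIntegral_eq_integral_of_ae_compl_eq_zero hsupp]
  simp only [one_div, smul_eq_mul, fourier_coe_apply, ofReal_sub]
  congr 1
  refine setIntegral_congr_fun measurableSet_Ioc fun x _ => ?_
  rw [mul_comm]
  push_cast
  ring_nf

theorem analyticOnNhd_sum_mul_cexp (s : Finset ℤ) (c : ℤ → ℂ) (T : ℝ) :
    AnalyticOnNhd ℝ (fun x : ℝ => ∑ n ∈ s, c n * cexp (2 * π * I * n * x / T)) univ := by
  have hP : Differentiable ℂ fun z : ℂ => ∑ n ∈ s, c n * cexp (2 * π * I * n * z / T) := by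
    fun_prop
  exact fun x _ => (hP.analyticAt (x : ℂ)).restrictScalars.fun_comp (ofRealCLM.analyticAt x)

theorem ae_restrict_eq_zero_of_eventually_fourierCoeffOn_eq_zero {a b c d : ℝ} (hab : a < b)
    (hcd : c < d) (hIoo : Ioo c d ⊆ Ioc a b) {f : ℝ → ℂ}
    (hf : MemLp f 2 (volume.restrict (Ioc a b)))
    (hcoeff : ∀ᶠ n : ℤ in cofinite, fourierCoeffOn hab f n = 0)
    (hzero : ∀ᵐ x ∂volume.restrict (Ioo c d), f x = 0) :
    f =ᵐ[volume.restrict (Ioc a b)] 0 := by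
  set s := (eventually_cofinite.1 hcoeff).toFinset
  have hfP := ae_restrict_eq_sum_fourierCoeffOn_mul_cexp hab hf (s := s) fun n hn => by
    simpa [s] using hn
  have hP : (fun x : ℝ => ∑ n ∈ s, fourierCoeffOn hab f n * cexp (2 * π * I * n * x / (b - a : ℝ)))
      = 0 := by
    refine (analyticOnNhd_sum_mul_cexp _ _ _).eq_zero_of_ae_eq_zero_on_Ioo hcd ?_
    filter_upwards [ae_restrict_of_ae_restrict_of_subset hIoo hfP, hzero] with x hfPx hfx
    rw [← hfPx, hfx]
  rwa [hP] at hfP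

theorem ae_eq_zero_of_eventually_integral_mul_cexp_eq_zero {ωm Ts : ℝ} (hTs : 0 < Ts)
    (hNyq : ωm < π / Ts) {H : ℝ → ℂ} (hH : MemLp H 2)
    (hsupp : ∀ᵐ ω, ω ∉ Icc (-ωm) ωm → H ω = 0)
    (hzero : ∀ᶠ n : ℤ in cofinite, ∫ ω, H ω * cexp (I * ω * (n * Ts)) = 0) :
    H =ᵐ[volume] 0 := by
  set L := π / Ts with hL
  have hab : -L < L := neg_lt_self (by positivity)
  have hsuppL : ∀ᵐ ω, ω ∉ Ioc (-L) L → H ω = 0 := by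
    filter_upwards [hsupp] with ω hω hωL
    exact hω fun h => hωL ⟨by linarith [h.1], by linarith [h.2]⟩
  have hexp : ∀ (n : ℤ) (ω : ℝ),
      -(2 * π * I * n * ω / (L - -L : ℝ)) = I * ω * ((-n : ℤ) * Ts) := fun n ω => by
    rw [hL]; push_cast; field_simp; ring
  have hcoeff : ∀ᶠ n : ℤ in cofinite, fourierCoeffOn hab H n = 0 := by
    filter_upwards [neg_injective.tendsto_cofinite.eventually hzero] with n hn
    rw [fourierCoeffOn_eq_integral_mul_cexp hab hsuppL]
    simp only [hexp, hn, mul_zero]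
  have hIoo : Ioo (max ωm (-L)) L ⊆ Ioc (-L) L := fun x hx =>
    ⟨(le_max_right _ _).trans_lt hx.1, hx.2.le⟩
  have hgap : ∀ᵐ ω ∂volume.restrict (Ioo (max ωm (-L)) L), H ω = 0 := by
    filter_upwards [ae_restrict_of_ae hsupp, ae_restrict_mem measurableSet_Ioo] with ω hω hωI
    exact hω fun h => ((le_max_left _ _).trans_lt hωI.1).not_ge h.2
  have hHL := ae_restrict_eq_zero_of_eventually_fourierCoeffOn_eq_zero hab (max_lt hNyq hab) hIoo
    (hH.restrict _) hcoeff hgap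
  filter_upwards [hsuppL, ae_imp_of_ae_restrict hHL] with ω hout hin
  by_cases hω : ω ∈ Ioc (-L) L
  · exact hin hω
  · exact hout hω

namespace IsBandlimited

variable {ωm : ℝ} {f f₁ f₂ : ℝ → ℝ}

theorem tendsto_cocompact_zero (hf : IsBandlimited ωm f) : Tendsto f (cocompact ℝ) (𝓝 0) := by
  obtain ⟨F, -, -, hfF⟩ := hf
  have h := (tendsto_integral_mul_cexp_I_mul_cocompact F).const_mul (1 / (2 * π) : ℂ)
  rw [mul_zero, ← funext hfF, ← ofReal_zero] at h
  exact tendsto_ofReal_iff.1 h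

theorem sub (hf₁ : IsBandlimited ωm f₁) (hf₂ : IsBandlimited ωm f₂) :
    IsBandlimited ωm (f₁ - f₂) := by
  obtain ⟨F₁, hF₁, hsupp₁, hf₁F⟩ := hf₁
  obtain ⟨F₂, hF₂, hsupp₂, hf₂F⟩ := hf₂
  have hint : ∀ {F : ℝ → ℂ}, MemLp F 2 → (∀ᵐ ω, ω ∉ Icc (-ωm) ωm → F ω = 0) → ∀ t : ℝ,
      Integrable fun ω : ℝ => F ω * cexp (I * ω * t) := fun hF hsupp =>
    integrable_mul_cexp_I_mul (hF.integrable_of_ae_notMem_eq_zero one_le_two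
      measure_Icc_lt_top.ne hsupp)
  refine ⟨F₁ - F₂, hF₁.sub hF₂, ?_, fun t => ?_⟩
  · filter_upwards [hsupp₁, hsupp₂] with ω h₁ h₂ hω
    rw [Pi.sub_apply, h₁ hω, h₂ hω, sub_zero]
  · simp only [Pi.sub_apply, sub_mul, ofReal_sub, hf₁F, hf₂F,
      integral_sub (hint hF₁ hsupp₁ t) (hint hF₂ hsupp₂ t), mul_sub]

theorem eq_zero_of_eventually_sample_eq_zero {Ts : ℝ} (hf : IsBandlimited ωm f) (hTs : 0 < Ts)
    (hNyq : ωm < π / Ts) (h : ∀ᶠ n : ℤ in cofinite, f (n * Ts) = 0) : f = 0 := by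
  obtain ⟨F, hF, hsupp, hfF⟩ := hf
  have hzero : ∀ᶠ n : ℤ in cofinite, ∫ ω, F ω * cexp (I * ω * (n * Ts)) = 0 := by
    filter_upwards [h] with n hn
    have := hfF (n * Ts)
    rw [hn, ofReal_zero, eq_comm, mul_eq_zero] at this
    push_cast at this
    exact this.resolve_left (by simp [Real.pi_ne_zero])
  have hF0 := ae_eq_zero_of_eventually_integral_mul_cexp_eq_zero hTs hNyq hF hsupp hzero
  funext t
  have hint : ∫ ω, F ω * cexp (I * ω * t) = 0 := by
    rw [← integral_zero ℝ ℂ]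
    refine integral_congr_ae ?_
    filter_upwards [hF0] with ω hω
    rw [hω, Pi.zero_apply, zero_mul]
  have hft := hfF t
  rwa [hint, mul_zero, ofReal_eq_zero] at hft

end IsBandlimited

theorem uniqueness_above_nyquist_general_general
    (ωm lam Ts : ℝ) (hlam : 0 < lam)
    (hTs : 0 < Ts) (hNyq : Ts < Real.pi / ωm)
    (g G : ℝ → ℝ) (hg : Set.InjOn g (Set.Icc (-lam) lam))
    (hGin : ∀ a : ℝ, |a| ≤ lam → G a = g a)
    (f₁ f₂ : ℝ → ℝ)
    (hf₁ : IsBandlimited ωm f₁) (hf₂ : IsBandlimited ωm f₂)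
    (hsamp : ∀ n : ℤ, G (f₁ (n * Ts)) = G (f₂ (n * Ts))) :
    f₁ = f₂ := by
  have hωm : ωm < π / Ts := by
    rcases le_or_gt ωm 0 with h | h
    · exact h.trans_lt (by positivity)
    · rwa [lt_div_iff₀ hTs, mul_comm, ← lt_div_iff₀ h]
  have hGinj : InjOn G (Icc (-lam) lam) :=
    hg.congr fun a ha => (hGin a (abs_le.2 ha)).symm
  have hsampling : Tendsto (fun n : ℤ => (n : ℝ) * Ts) cofinite (cocompact ℝ) :=
    (tendsto_cocompact_mul_right₀ hTs.ne').comp Int.tendsto_coe_cofinite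
  have hsamples : ∀ᶠ n : ℤ in cofinite, f₁ (n * Ts) = f₂ (n * Ts) :=
    hGinj.eventually_eq_of_tendsto (Icc_mem_nhds (neg_lt_zero.2 hlam) hlam)
      (hf₁.tendsto_cocompact_zero.comp hsampling) (hf₂.tendsto_cocompact_zero.comp hsampling)
      (Eventually.of_forall hsamp)
  exact sub_eq_zero.1 <| (hf₁.sub hf₂).eq_zero_of_eventually_sample_eq_zero hTs hωm <|
    hsamples.mono fun n hn => sub_eq_zero.2 hn

theorem uniqueness_above_nyquist_general
    (ωm lam Ts : ℝ) (hωm : 0 < ωm) (hlam : 0 < lam)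
    (hTs : 0 < Ts) (hNyq : Ts < Real.pi / ωm)
    (g G : ℝ → ℝ) (hg : Set.InjOn g (Set.Icc (-lam) lam))
    (hGbound : ∀ a : ℝ, |G a| ≤ lam)
    (hGin : ∀ a : ℝ, |a| ≤ lam → G a = g a)
    (f₁ f₂ : ℝ → ℝ)
    (hf₁ : IsBandlimited ωm f₁) (hf₂ : IsBandlimited ωm f₂)
    (hsamp : ∀ n : ℤ, G (f₁ (n * Ts)) = G (f₂ (n * Ts))) :
    f₁ = f₂ :=
  uniqueness_above_nyquist_general_general ωm lam Ts hlam hTs hNyq g G hg hGin f₁ f₂ hf₁ hf₂ hsamp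
end

section
/- Let ω_m > 0 and let the sampling interval satisfy T_s > π/ω_m (sampling below the Nyquist rate). Then there exist two functions f₁ ≠ f₂, both ω_m-bandlimited with finite energy, such that f₁(n T_s) = f₂(n T_s) for every n ∈ ℤ; consequently, for any memoryless operator G : ℝ → ℝ, their nonlinear samples G(f₁(n T_s)) and G(f₂(n T_s)) coincide for all n ∈ ℤ. -/
/-!
Below the Nyquist rate the frequencies `ωm` and `a = 2π/Ts - ωm` alias:
`cos (a n Ts) = cos (ωm n Ts)` for every `n : ℤ`. Hence `(cos (a t) - cos (ωm t)) / (π t)`, the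
inverse Fourier transform of `∓i` on `±[a, ωm]`, vanishes at every sample point. Since `Ts > π/ωm`
exactly when `|a| < ωm`, its spectrum lies in `[-ωm, ωm]` and it is not identically zero, so its
samples cannot tell it from `0`.
-/

open MeasureTheory Real Set

noncomputable def bandpassSpectrum (a b : ℝ) : ℝ → ℂ :=
  (Icc a b).indicator (fun _ => -Complex.I) + (Icc (-b) (-a)).indicator (fun _ => Complex.I)

/-- At `t = 0` the junk value `x / 0 = 0` is also the continuous extension. -/
noncomputable def bandpass (a b t : ℝ) : ℝ :=
  (cos (a * t) - cos (b * t)) / (π * t)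

lemma memLp_bandpassSpectrum (a b : ℝ) : MemLp (bandpassSpectrum a b) 2 volume := by
  apply MemLp.add <;>
    exact memLp_indicator_const 2 measurableSet_Icc _ (Or.inr measure_Icc_lt_top.ne)

lemma bandpassSpectrum_eq_zero_of_notMem {ωm a b ω : ℝ} (ha : -ωm ≤ a) (hb : b ≤ ωm)
    (hω : ω ∉ Icc (-ωm) ωm) : bandpassSpectrum a b ω = 0 := by
  have h₁ : ω ∉ Icc a b := fun h => hω ⟨ha.trans h.1, h.2.trans hb⟩
  have h₂ : ω ∉ Icc (-b) (-a) := fun h => hω ⟨by linarith [h.1], by linarith [h.2]⟩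
  simp [bandpassSpectrum, h₁, h₂]

lemma integral_sin_mul_right (a b t : ℝ) :
    ∫ ω in a..b, sin (ω * t) = (cos (a * t) - cos (b * t)) / t := by
  rcases eq_or_ne t 0 with rfl | ht
  · simp
  · rw [intervalIntegral.integral_comp_mul_right sin ht, integral_sin, smul_eq_mul,
      inv_mul_eq_div]

lemma neg_I_mul_exp_add_I_mul_exp_neg (ω t : ℝ) :
    -Complex.I * Complex.exp (Complex.I * ω * t) +
        Complex.I * Complex.exp (Complex.I * (-ω : ℝ) * t) = ((2 * sin (ω * t) : ℝ) : ℂ) := by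
  push_cast
  rw [Complex.sin]
  ring_nf

lemma integral_bandpassSpectrum_mul_exp {a b : ℝ} (hab : a ≤ b) (t : ℝ) :
    ∫ ω, bandpassSpectrum a b ω * Complex.exp (Complex.I * ω * t)
      = ((2 * ((cos (a * t) - cos (b * t)) / t) : ℝ) : ℂ) := by
  set e : ℝ → ℂ := fun ω => Complex.exp (Complex.I * ω * t) with he
  have he_cont : Continuous e := by fun_prop
  have hsplit : (fun ω => bandpassSpectrum a b ω * e ω) =
      fun ω => (Icc a b).indicator (fun ω => -Complex.I * e ω) ω +
        (Icc (-b) (-a)).indicator (fun ω => Complex.I * e ω) ω := by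
    ext ω
    simp only [bandpassSpectrum, Pi.add_apply, add_mul, indicator_mul_left]
  have hint : ∀ (c : ℂ) (s t : ℝ), Integrable ((Icc s t).indicator (fun ω => c * e ω)) :=
    fun c s t => ((continuous_const.mul he_cont).integrableOn_Icc).integrable_indicator
      measurableSet_Icc
  rw [hsplit, integral_add (hint _ _ _) (hint _ _ _), integral_indicator measurableSet_Icc,
    integral_indicator measurableSet_Icc, integral_Icc_eq_integral_Ioc,
    integral_Icc_eq_integral_Ioc, ← intervalIntegral.integral_of_le hab,
    ← intervalIntegral.integral_of_le (neg_le_neg hab),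
    ← intervalIntegral.integral_comp_neg (fun ω => Complex.I * e ω),
    ← intervalIntegral.integral_add ((by fun_prop : Continuous _).intervalIntegrable _ _)
      ((by fun_prop : Continuous _).intervalIntegrable _ _)]
  simp only [he, neg_I_mul_exp_add_I_mul_exp_neg]
  rw [intervalIntegral.integral_ofReal, intervalIntegral.integral_const_mul,
    integral_sin_mul_right]

lemma isBandlimited_zero (ωm : ℝ) : IsBandlimited ωm 0 :=
  ⟨0, MemLp.zero, ae_of_all _ fun _ _ => rfl, fun t => by simp⟩

lemma isBandlimited_bandpass {ωm a b : ℝ} (ha : -ωm ≤ a) (hab : a ≤ b) (hb : b ≤ ωm) :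
    IsBandlimited ωm (bandpass a b) := by
  refine ⟨bandpassSpectrum a b, memLp_bandpassSpectrum a b,
    ae_of_all _ fun ω => bandpassSpectrum_eq_zero_of_notMem ha hb, fun t => ?_⟩
  rw [integral_bandpassSpectrum_mul_exp hab, bandpass]
  push_cast
  ring

lemma bandpass_int_mul_eq_zero {a b Ts : ℝ} (h : (a + b) * Ts = 2 * π) (n : ℤ) :
    bandpass a b (n * Ts) = 0 := by
  have hsum : (a * (n * Ts) + b * (n * Ts)) / 2 = n * π := by linear_combination (n / 2 : ℝ) * h
  rw [bandpass, cos_sub_cos, hsum, sin_int_mul_pi]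
  simp

lemma bandpass_ne_zero {a b : ℝ} (hab : |a| < b) : bandpass a b ≠ 0 := by
  have hb : 0 < b := (abs_nonneg a).trans_lt hab
  set t := π / (2 * b) with ht_def
  have ht : 0 < t := by positivity
  have hbt : b * t = π / 2 := by rw [ht_def]; field_simp
  have hcos_at : 0 < cos (a * t) := by
    rw [← cos_abs, abs_mul, abs_of_pos ht]
    apply cos_pos_of_mem_Ioo
    constructor
    · nlinarith [abs_nonneg a]
    · rw [← hbt]; exact mul_lt_mul_of_pos_right hab ht
  intro h
  have := congrFun h t
  rw [bandpass, hbt, cos_pi_div_two, sub_zero, Pi.zero_apply] at this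
  exact (div_pos hcos_at (by positivity)).ne' this

theorem non_identifiability_below_nyquist
    (ωm Ts : ℝ) (hωm : 0 < ωm) (hTs : Real.pi / ωm < Ts) :
    ∃ f₁ f₂ : ℝ → ℝ, f₁ ≠ f₂ ∧
      IsBandlimited ωm f₁ ∧ IsBandlimited ωm f₂ ∧
      (∀ n : ℤ, f₁ (n * Ts) = f₂ (n * Ts)) ∧
      ∀ G : ℝ → ℝ, ∀ n : ℤ, G (f₁ (n * Ts)) = G (f₂ (n * Ts)) := by
  have hTs₀ : 0 < Ts := (div_pos pi_pos hωm).trans hTs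
  have hnyq : π / Ts < ωm := by
    rw [div_lt_iff₀ hTs₀]; rwa [div_lt_iff₀ hωm, mul_comm] at hTs
  set a := 2 * (π / Ts) - ωm with ha_def
  have ha : |a| < ωm := abs_lt.mpr ⟨by linarith [div_pos pi_pos hTs₀], by linarith⟩
  have hsamples : ∀ n : ℤ, bandpass a ωm (n * Ts) = 0 :=
    bandpass_int_mul_eq_zero (by rw [ha_def]; field_simp; ring)
  refine ⟨0, bandpass a ωm, (bandpass_ne_zero ha).symm, isBandlimited_zero ωm,
    isBandlimited_bandpass (abs_le.mp ha.le).1 (le_abs_self a |>.trans ha.le) le_rfl,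
    fun n => (hsamples n).symm, fun G n => by rw [hsamples n, Pi.zero_apply]⟩
end

section
/- Let ω_m > 0, λ > 0, and let T_s = π/ω_m (sampling exactly at the Nyquist rate). Let g : ℝ → ℝ restrict to a bijection from [-λ, λ] onto [-λ, λ], and let G : ℝ → ℝ be a generalized amplitude-limiting operator with in-range response g. Then: (i) for every ω_m-bandlimited finite-energy function f for which there exists n₀ ∈ ℤ with |f(n₀ T_s)| > λ, there exists an ω_m-bandlimited finite-energy function f̂ with f̂ ≠ f and G(f̂(n T_s)) = G(f(n T_s)) for all n ∈ ℤ; (ii) such a function f exists, e.g. f(t) = 2λ·sinc(t/T_s − n₀). In particular, signals in this class are not uniquely identifiable from their nonlinear samples at the Nyquist rate. -/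
/-! At the Nyquist rate `Ts = π / ωm` the shifted kernel `sinc (t / Ts - n₀)` is bandlimited and
vanishes at every sample point `n Ts` except `n₀ Ts`, where it equals `1`; adding a multiple of it
to a bandlimited signal changes exactly one sample, to any prescribed value. If
`|f (n₀ Ts)| > λ`, the output `G (f (n₀ Ts)) ∈ [-λ, λ] = g [-λ, λ]` is also the output `G b` of some
in-range `b ≠ f (n₀ Ts)`, and moving that sample to `b` leaves all nonlinear samples unchanged. -/

open MeasureTheory Set Complex

lemma sinc_eq_real_sinc (x : ℝ) : sinc x = Real.sinc (Real.pi * x) := by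
  by_cases hx : x = 0
  · simp [sinc, hx]
  · simp [sinc, hx, Real.sinc_of_ne_zero, Real.pi_ne_zero]

lemma sinc_intCast_sub_intCast (n m : ℤ) : sinc (n - m) = if n = m then 1 else 0 := by
  split_ifs with h
  · simp [sinc, h]
  · rw [← Int.cast_sub, sinc_eq_real_sinc,
      Real.sinc_of_ne_zero (by simp [Real.pi_ne_zero, sub_eq_zero, h]), mul_comm,
      Real.sin_int_mul_pi, zero_div]

lemma integral_exp_I_mul_eq_sinc (W s : ℝ) :
    ∫ ω in (-W)..W, exp (I * s * ω) = 2 * W * Real.sinc (W * s) := by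
  rcases eq_or_ne s 0 with rfl | hs
  · simp only [ofReal_zero, mul_zero, zero_mul, exp_zero, intervalIntegral.integral_const,
      sub_neg_eq_add, real_smul, ofReal_add, mul_one, Real.sinc_zero, ofReal_one]
    ring
  rcases eq_or_ne W 0 with rfl | hW
  · simp
  rw [integral_exp_mul_complex (by simp [hs, I_ne_zero]),
    Real.sinc_of_ne_zero (mul_ne_zero hW hs)]
  have hsin : exp (I * s * W) - exp (I * s * -W) = 2 * sin (W * s) * I := by
    rw [two_sin, mul_assoc _ I I, I_mul_I]
    ring_nf
  have hW' : (W : ℂ) ≠ 0 := by exact_mod_cast hW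
  push_cast
  rw [hsin]
  field_simp

lemma integrable_mul_exp_of_memLp_two {a b : ℝ} {F : ℝ → ℂ} (hF : MemLp F 2)
    (hsupp : ∀ᵐ ω : ℝ, ω ∉ Icc a b → F ω = 0) (t : ℝ) :
    Integrable (fun ω : ℝ => F ω * exp (I * ω * t)) := by
  have hFint : Integrable F :=
    ((hF.locallyIntegrable one_le_two).integrableOn_isCompact isCompact_Icc)
      |>.integrable_of_ae_notMem_eq_zero hsupp
  refine hFint.mul_bdd (c := 1)
    (by fun_prop : Continuous fun ω : ℝ => exp (I * ω * t)).aestronglyMeasurable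
    (ae_of_all _ fun ω => ?_)
  rw [show I * ω * t = ((ω * t : ℝ) : ℂ) * I by push_cast; ring, norm_exp_ofReal_mul_I]

lemma IsBandlimited.add {ωm : ℝ} {f h : ℝ → ℝ} (hf : IsBandlimited ωm f)
    (hh : IsBandlimited ωm h) : IsBandlimited ωm (f + h) := by
  obtain ⟨F, hF, hFsupp, hfF⟩ := hf
  obtain ⟨H, hH, hHsupp, hhH⟩ := hh
  refine ⟨F + H, hF.add hH, ?_, fun t => ?_⟩
  · filter_upwards [hFsupp, hHsupp] with ω hFω hHω hω
    simp [hFω hω, hHω hω]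
  · simp only [Pi.add_apply, add_mul, ofReal_add]
    rw [integral_add (integrable_mul_exp_of_memLp_two hF hFsupp t)
      (integrable_mul_exp_of_memLp_two hH hHsupp t), hfF, hhH, mul_add]

lemma isBandlimited_const_mul_sinc {ωm : ℝ} (hωm : 0 < ωm) (c x : ℝ) :
    IsBandlimited ωm (fun t => c * sinc (t / (Real.pi / ωm) - x)) := by
  have hωm0 : ωm ≠ 0 := hωm.ne'
  set A : ℂ := ((c * (Real.pi / ωm) : ℝ) : ℂ)
  set shift : ℝ := x * (Real.pi / ωm)
  refine ⟨(Icc (-ωm) ωm).indicator fun ω => A * exp (-(I * ω * shift)), ?_,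
    ae_of_all _ fun ω hω => indicator_of_notMem hω _, fun t => ?_⟩
  · refine (HasCompactSupport.intro isCompact_Icc fun ω hω => indicator_of_notMem hω _)
      |>.memLp_of_bound
        ((by fun_prop : Continuous _).aestronglyMeasurable.indicator measurableSet_Icc) ‖A‖
      (ae_of_all _ fun ω => (norm_indicator_le_norm_self _ _).trans_eq ?_)
    rw [norm_mul, show -(I * ω * shift) = ((-(ω * shift) : ℝ) : ℂ) * I by push_cast; ring,
      norm_exp_ofReal_mul_I, mul_one]
  · have hintegrand : (fun ω : ℝ => (Icc (-ωm) ωm).indicator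
          (fun ω => A * exp (-(I * ω * shift))) ω * exp (I * ω * t))
        = (Icc (-ωm) ωm).indicator fun ω => A * exp (I * (t - shift : ℝ) * ω) := by
      ext ω
      simp only [indicator_apply]
      split_ifs
      · rw [mul_assoc, ← exp_add]
        push_cast
        ring_nf
      · exact zero_mul _
    rw [hintegrand]
    beta_reduce
    rw [integral_indicator measurableSet_Icc, integral_Icc_eq_integral_Ioc,
      ← intervalIntegral.integral_of_le (by linarith), intervalIntegral.integral_const_mul,
      integral_exp_I_mul_eq_sinc, sinc_eq_real_sinc,
      show Real.pi * (t / (Real.pi / ωm) - x) = ωm * (t - shift) by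
        simp only [shift]; field_simp]
    have hωmC : (ωm : ℂ) ≠ 0 := by exact_mod_cast hωm0
    push_cast [A]
    field_simp

lemma IsBandlimited.exists_update_sample {ωm : ℝ} (hωm : 0 < ωm) {f : ℝ → ℝ}
    (hf : IsBandlimited ωm f) (n₀ : ℤ) (b : ℝ) :
    ∃ fhat : ℝ → ℝ, IsBandlimited ωm fhat ∧ ∀ n : ℤ,
      fhat (n * (Real.pi / ωm)) =
        Function.update (fun n : ℤ => f (n * (Real.pi / ωm))) n₀ b n := by
  refine ⟨f + fun t => (b - f (n₀ * (Real.pi / ωm))) * sinc (t / (Real.pi / ωm) - n₀),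
    hf.add (isBandlimited_const_mul_sinc hωm _ _), fun n => ?_⟩
  rw [Pi.add_apply, mul_div_cancel_right₀ _ (by positivity), sinc_intCast_sub_intCast,
    Function.update_apply]
  split_ifs with h
  · subst h
    ring
  · simp

lemma exists_abs_le_map_eq {lam : ℝ} {g G : ℝ → ℝ}
    (hg : SurjOn g (Icc (-lam) lam) (Icc (-lam) lam)) (hGbound : ∀ a, |G a| ≤ lam)
    (hGin : ∀ a, |a| ≤ lam → G a = g a) (a : ℝ) : ∃ b, |b| ≤ lam ∧ G b = G a := by
  obtain ⟨b, hb, hgb⟩ := hg (abs_le.mp (hGbound a))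
  exact ⟨b, abs_le.mpr hb, (hGin b (abs_le.mpr hb)).trans hgb⟩

theorem non_identifiability_at_nyquist
    (ωm lam Ts : ℝ) (hωm : 0 < ωm) (hlam : 0 < lam)
    (hTs : Ts = Real.pi / ωm)
    (g G : ℝ → ℝ) (hg : Set.BijOn g (Set.Icc (-lam) lam) (Set.Icc (-lam) lam))
    (hGbound : ∀ a : ℝ, |G a| ≤ lam)
    (hGin : ∀ a : ℝ, |a| ≤ lam → G a = g a) :
    (∀ f : ℝ → ℝ, IsBandlimited ωm f → (∃ n₀ : ℤ, lam < |f (n₀ * Ts)|) →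
      ∃ fhat : ℝ → ℝ, IsBandlimited ωm fhat ∧ fhat ≠ f ∧
        ∀ n : ℤ, G (fhat (n * Ts)) = G (f (n * Ts))) ∧
    (∀ n₀ : ℤ, IsBandlimited ωm (fun t : ℝ => 2 * lam * sinc (t / Ts - n₀)) ∧
      lam < |2 * lam * sinc ((n₀ : ℝ) * Ts / Ts - n₀)|) := by
  subst hTs
  refine ⟨fun f hf ⟨n₀, hn₀⟩ => ?_, fun n₀ => ⟨isBandlimited_const_mul_sinc hωm _ _, ?_⟩⟩
  · obtain ⟨b, hb, hGb⟩ :=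
      exists_abs_le_map_eq hg.surjOn hGbound hGin (f (n₀ * (Real.pi / ωm)))
    obtain ⟨fhat, hfhat, hsamples⟩ := hf.exists_update_sample hωm n₀ b
    refine ⟨fhat, hfhat, fun hfhat_eq => ?_, fun n => ?_⟩
    · have hsample := hsamples n₀
      rw [hfhat_eq, Function.update_self] at hsample
      rw [hsample] at hn₀
      linarith
    · rw [hsamples, Function.update_apply]
      split_ifs with h
      · rw [h, hGb]
      · rfl
  · rw [mul_div_cancel_right₀ _ (by positivity), sub_self, sinc, if_pos rfl, mul_one,
      abs_of_pos (by positivity)]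
    linarith
end

section
/- Let ω_m > 0, let 0 < T_s < π/ω_m, let h be ω_m-bandlimited with finite energy, and suppose there is N ∈ ℕ with h(n T_s) = 0 for all integers |n| > N. Then for every real ω with ω_m < |ω| < π/T_s, the finite sum Σ_{n=-N}^{N} h(n T_s) e^{-i n T_s ω} equals 0. -/
open MeasureTheory Set Complex
open scoped Real Pointwise

namespace AddCircle

variable {T : ℝ} [hT : Fact (0 < T)]

theorem ae_eq_sum_fourier_of_fourierCoeff_eq_zero {f : AddCircle T → ℂ}
    (hf : MemLp f 2 haarAddCircle) (s : Finset ℤ) (hs : ∀ n ∉ s, fourierCoeff f n = 0) :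
    f =ᵐ[haarAddCircle] ⇑(∑ n ∈ s, fourierCoeff f n • fourier n) := by
  have hcoeff : fourierCoeff (hf.toLp f) = fourierCoeff f := fourierCoeff_congr_ae hf.coeFn_toLp
  have hsum : hf.toLp f = ∑ n ∈ s, fourierCoeff f n • fourierLp 2 n := by
    refine (hasSum_fourier_series_L2 (hf.toLp f)).unique ?_
    rw [hcoeff]
    exact hasSum_sum_of_ne_finset_zero fun n hn => by rw [hs n hn, zero_smul]
  have hlin : ∑ n ∈ s, fourierCoeff f n • fourierLp 2 n =
      ContinuousMap.toLp (E := ℂ) 2 (haarAddCircle (T := T)) ℂ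
        (∑ n ∈ s, fourierCoeff f n • fourier n) := by
    simp only [map_sum, map_smul]
  refine hf.coeFn_toLp.symm.trans ?_
  rw [hsum, hlin]
  exact ContinuousMap.coeFn_toLp _ _

theorem fourierCoeff_liftIoc_of_ae_eq_zero {a : ℝ} {f : ℝ → ℂ}
    (hf : ∀ᵐ x, x ∉ Ioc a (a + T) → f x = 0) (n : ℤ) :
    fourierCoeff (liftIoc T a f) n = (1 / T) • ∫ x : ℝ, fourier (-n) (x : AddCircle T) • f x := by
  rw [fourierCoeff_eq_intervalIntegral _ n a,
    intervalIntegral.integral_of_le (by linarith [hT.out]),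
    setIntegral_congr_fun measurableSet_Ioc fun x hx => by rw [liftIoc_coe_apply hx]]
  congr 1
  refine setIntegral_eq_integral_of_ae_compl_eq_zero ?_
  filter_upwards [hf] with x hx hxa
  rw [hx hxa, smul_zero]

theorem eqOn_zero_of_liftIoc_ae_eq {a : ℝ} {f : ℝ → ℂ} {g : C(AddCircle T, ℂ)}
    (hfg : liftIoc T a f =ᵐ[haarAddCircle] g) {U : Set ℝ} (hU : IsOpen U)
    (hUa : U ⊆ Ioc a (a + T)) (hfU : ∀ᵐ x, x ∈ U → f x = 0) :
    EqOn (fun x : ℝ => g x) 0 U := by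
  have hvol : liftIoc T a f =ᵐ[volume] g := by
    rw [volume_eq_smul_haarAddCircle]
    exact Measure.ae_smul_measure hfg _
  have hIoc : (fun x : ℝ => liftIoc T a f x) =ᵐ[volume.restrict (Ioc a (a + T))]
      fun x : ℝ => g x :=
    (AddCircle.measurePreserving_mk T a).quasiMeasurePreserving.ae_eq_comp hvol
  have hgU : (fun x : ℝ => g x) =ᵐ[volume.restrict U] 0 := by
    filter_upwards [ae_restrict_of_ae_restrict_of_subset hUa hIoc, ae_restrict_of_ae hfU,
      ae_restrict_mem hU.measurableSet] with x hgx hfx hx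
    rw [← hgx, liftIoc_coe_apply (hUa hx), hfx hx, Pi.zero_apply]
  exact Measure.eqOn_open_of_ae_eq hgU hU
    ((map_continuous g).comp (AddCircle.continuous_mk' T)).continuousOn continuousOn_const

end AddCircle

theorem fourier_coe_apply_two_pi_div {Ts : ℝ} [Fact (0 < 2 * π / Ts)] (n : ℤ) (x : ℝ) :
    fourier n (x : AddCircle (2 * π / Ts)) = exp (I * n * Ts * x) := by
  rw [fourier_coe_apply]
  congr 1
  push_cast
  field_simp

theorem fourierCoeff_liftIoc_of_bandlimited {ωm Ts : ℝ} (hband : ωm < π / Ts)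
    [Fact (0 < 2 * π / Ts)] {h : ℝ → ℝ} {F : ℝ → ℂ}
    (hF : ∀ᵐ ω, ω ∉ Icc (-ωm) ωm → F ω = 0)
    (hFh : ∀ t : ℝ, (h t : ℂ) = (1 / (2 * π)) * ∫ ω, F ω * exp (I * ω * t)) (n : ℤ) :
    fourierCoeff (AddCircle.liftIoc (2 * π / Ts) (-(π / Ts)) F) n = Ts * h (-n * Ts) := by
  have hIoc : Icc (-ωm) ωm ⊆ Ioc (-(π / Ts)) (-(π / Ts) + 2 * π / Ts) := by
    rw [show -(π / Ts) + 2 * π / Ts = π / Ts by ring]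
    exact fun x hx => ⟨by linarith [hx.1], by linarith [hx.2]⟩
  have hF' : ∀ᵐ ω, ω ∉ Ioc (-(π / Ts)) (-(π / Ts) + 2 * π / Ts) → F ω = 0 := by
    filter_upwards [hF] with ω hω hωIoc using hω fun hωIcc => hωIoc (hIoc hωIcc)
  rw [AddCircle.fourierCoeff_liftIoc_of_ae_eq_zero hF' n]
  simp_rw [fourier_coe_apply_two_pi_div, smul_eq_mul]
  have hintegrand : ∫ x : ℝ, exp (I * ↑(-n) * Ts * x) * F x =
      ∫ ω : ℝ, F ω * exp (I * ω * ↑(-n * Ts)) :=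
    integral_congr_ae (.of_forall fun x => by push_cast; rw [mul_comm]; congr 2; ring)
  rw [hintegrand, hFh, real_smul, ← mul_assoc]
  congr 1
  push_cast
  field_simp

theorem dtft_vanishes_out_of_band_finite_support_general
    (ωm Ts : ℝ) (hTs : 0 < Ts)
    (h : ℝ → ℝ) (hbl : IsBandlimited ωm h)
    (N : ℕ) (hsupp : ∀ n : ℤ, (N : ℤ) < |n| → h (n * Ts) = 0) :
    ∀ ω : ℝ, ωm < |ω| → |ω| < Real.pi / Ts →
      ∑ n ∈ Finset.Icc (-(N : ℤ)) (N : ℤ),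
        (h (n * Ts) : ℂ) * Complex.exp (-Complex.I * (n : ℂ) * (Ts : ℂ) * (ω : ℂ)) = 0 := by
  intro ω hω hωs
  obtain ⟨F, hF2, hFsupp, hFh⟩ := hbl
  have : Fact (0 < 2 * π / Ts) := ⟨by positivity⟩
  have hcoeff := fourierCoeff_liftIoc_of_bandlimited (hω.trans hωs) hFsupp hFh
  set G := AddCircle.liftIoc (2 * π / Ts) (-(π / Ts)) F
  have hG2 : MemLp G 2 AddCircle.haarAddCircle := (hF2.restrict _).memLp_liftIoc.haarAddCircle
  have hvanish : ∀ n ∉ -Finset.Icc (-(N : ℤ)) N, fourierCoeff G n = 0 := by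
    intro n hn
    rw [Finset.mem_neg', Finset.mem_Icc] at hn
    rw [hcoeff, ← Int.cast_neg, hsupp (-n) (by rw [lt_abs]; omega), ofReal_zero, mul_zero]
  have hGP := AddCircle.ae_eq_sum_fourier_of_fourierCoeff_eq_zero hG2 _ hvanish
  have hU : Ioo (-(π / Ts)) (π / Ts) \ Icc (-ωm) ωm ⊆
      Ioc (-(π / Ts)) (-(π / Ts) + 2 * π / Ts) := by
    rw [show -(π / Ts) + 2 * π / Ts = π / Ts by ring]
    exact sdiff_subset.trans Ioo_subset_Ioc_self
  have hωU : ω ∈ Ioo (-(π / Ts)) (π / Ts) \ Icc (-ωm) ωm :=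
    ⟨abs_lt.mp hωs, fun hωIcc => hω.not_ge (abs_le.mpr hωIcc)⟩
  have hPω := AddCircle.eqOn_zero_of_liftIoc_ae_eq hGP (isOpen_Ioo.sdiff isClosed_Icc) hU
    (by filter_upwards [hFsupp] with x hx hxU using hx hxU.2) hωU
  simp only [ContinuousMap.coe_sum, ContinuousMap.coe_smul, Finset.sum_apply, Pi.smul_apply,
    Finset.sum_neg_index, hcoeff, fourier_coe_apply_two_pi_div, Pi.zero_apply, Int.cast_neg,
    neg_neg, smul_eq_mul] at hPω
  rw [← mul_right_inj' (ofReal_ne_zero.mpr hTs.ne'), mul_zero, ← hPω, Finset.mul_sum]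
  refine Finset.sum_congr rfl fun n _ => ?_
  ring_nf

theorem dtft_vanishes_out_of_band_finite_support
    (ωm Ts : ℝ) (hωm : 0 < ωm) (hTs : 0 < Ts) (hNyq : Ts < Real.pi / ωm)
    (h : ℝ → ℝ) (hbl : IsBandlimited ωm h)
    (N : ℕ) (hsupp : ∀ n : ℤ, (N : ℤ) < |n| → h (n * Ts) = 0) :
    ∀ ω : ℝ, ωm < |ω| → |ω| < Real.pi / Ts →
      ∑ n ∈ Finset.Icc (-(N : ℤ)) (N : ℤ),
        (h (n * Ts) : ℂ) * Complex.exp (-Complex.I * (n : ℂ) * (Ts : ℂ) * (ω : ℂ)) = 0 :=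
  dtft_vanishes_out_of_band_finite_support_general ωm Ts hTs h hbl N hsupp
end

section
/- Let ω_m > 0 and 0 < T_s < π/ω_m. If h is ω_m-bandlimited with finite energy and there exists N ∈ ℕ such that h(n T_s) = 0 for every integer n with |n| > N, then h is identically zero on ℝ. -/
open MeasureTheory Filter Set
open scoped Real

theorem AnalyticOnNhd.eq_zero_of_ae_restrict_eq_zero {𝕜 E : Type*} [NontriviallyNormedField 𝕜]
    [NormedAddCommGroup E] [NormedSpace 𝕜 E] [MeasurableSpace 𝕜] [SecondCountableTopology 𝕜]
    [PreconnectedSpace 𝕜] {μ : Measure 𝕜} [NullSingletonClass μ] {f : 𝕜 → E}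
    (hf : AnalyticOnNhd 𝕜 f univ) {S : Set 𝕜} (hS : μ S ≠ 0)
    (hfS : ∀ᵐ x ∂μ.restrict S, f x = 0) :
    f = 0 := by
  refine funext fun x => (hf.eqOn_zero_or_eventually_ne_zero_of_preconnected
    isPreconnected_univ).resolve_right (fun hne => hS ?_) (mem_univ x)
  have hne_ae : ∀ᵐ x ∂μ, f x ≠ 0 := by
    simpa using! ae_restrict_le_codiscreteWithin (μ := μ) MeasurableSet.univ hne
  rw [← Measure.restrict_eq_zero, ← ae_eq_bot, eq_bot_iff]
  intro t _
  filter_upwards [ae_restrict_of_ae hne_ae, hfS] with x hne hzero using absurd hzero hne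

theorem analyticOnNhd_fourier_sum (T : ℝ) (c : ℤ → ℂ) (s : Finset ℤ) :
    AnalyticOnNhd ℝ (fun x : ℝ => ∑ n ∈ s, c n • fourier n (x : AddCircle T)) univ := by
  intro x _
  have hexp : AnalyticAt ℂ
      (fun z : ℂ => ∑ n ∈ s, c n • Complex.exp (2 * π * Complex.I * n * z / T)) x := by
    fun_prop
  simpa only [fourier_coe_apply, Function.comp_def] using
    hexp.restrictScalars.comp (Complex.ofRealCLM.analyticAt x)

section FourierSeries

variable {T : ℝ} [Fact (0 < T)]

theorem ae_eq_fourier_sum_of_fourierCoeff_eq_zero {G : AddCircle T → ℂ}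
    (hG : MemLp G 2 AddCircle.haarAddCircle) {s : Finset ℤ}
    (hs : ∀ n ∉ s, fourierCoeff G n = 0) :
    G =ᵐ[AddCircle.haarAddCircle] fun x => ∑ n ∈ s, fourierCoeff G n • fourier n x := by
  have hcoeff : fourierCoeff (hG.toLp G) = fourierCoeff G := fourierCoeff_congr_ae hG.coeFn_toLp
  have hsum : hG.toLp G = ∑ n ∈ s, fourierCoeff G n • fourierLp 2 n := by
    have hseries := hasSum_fourier_series_L2 (hG.toLp G)
    rw [hcoeff] at hseries
    exact hseries.unique (hasSum_sum_of_ne_finset_zero fun n hn => by rw [hs n hn, zero_smul])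
  have hterms : ∀ᵐ x ∂AddCircle.haarAddCircle, ∀ n ∈ s,
      (fourierCoeff G n • fourierLp (T := T) 2 n) x = fourierCoeff G n • fourier n x := by
    rw [eventually_all_finset]
    intro n _
    filter_upwards [Lp.coeFn_smul (fourierCoeff G n) (fourierLp (T := T) 2 n),
      coeFn_fourierLp (T := T) 2 n] with x hsmul hfourier
    rw [hsmul, Pi.smul_apply, hfourier]
  filter_upwards [hG.coeFn_toLp,
    Lp.coeFn_fun_finsetSum s (fun n => fourierCoeff G n • fourierLp (T := T) 2 n),
    hterms] with x hG_eq hsum_eq hterms_eq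
  rw [← hG_eq, hsum, hsum_eq]
  exact Finset.sum_congr rfl hterms_eq

variable {a : ℝ} {F : ℝ → ℂ}

theorem ae_restrict_eq_fourier_sum_of_fourierCoeff_eq_zero
    (hF : MemLp F 2 (volume.restrict (Ioc a (a + T)))) {s : Finset ℤ}
    (hs : ∀ n ∉ s, fourierCoeff (AddCircle.liftIoc T a F) n = 0) :
    F =ᵐ[volume.restrict (Ioc a (a + T))]
      fun x => ∑ n ∈ s, fourierCoeff (AddCircle.liftIoc T a F) n • fourier n (x : AddCircle T) := by
  have hcircle := ae_eq_fourier_sum_of_fourierCoeff_eq_zero hF.memLp_liftIoc.haarAddCircle hs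
  have hvol : AddCircle.liftIoc T a F =ᵐ[volume]
      fun x => ∑ n ∈ s, fourierCoeff (AddCircle.liftIoc T a F) n • fourier n x := by
    rw [AddCircle.volume_eq_smul_haarAddCircle]
    exact Measure.ae_smul_measure hcircle _
  filter_upwards [(AddCircle.measurePreserving_mk T a).quasiMeasurePreserving.ae_eq hvol,
    ae_restrict_mem measurableSet_Ioc] with x hx hmem
  rwa [Function.comp_apply, AddCircle.liftIoc_coe_apply hmem] at hx

theorem ae_restrict_eq_zero_of_fourierCoeff_eq_zero
    (hF : MemLp F 2 (volume.restrict (Ioc a (a + T)))) {s : Finset ℤ}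
    (hs : ∀ n ∉ s, fourierCoeff (AddCircle.liftIoc T a F) n = 0)
    {S : Set ℝ} (hS_sub : S ⊆ Ioc a (a + T)) (hS : volume S ≠ 0)
    (hFS : ∀ᵐ x ∂volume.restrict S, F x = 0) :
    ∀ᵐ x ∂volume.restrict (Ioc a (a + T)), F x = 0 := by
  have hpoly := ae_restrict_eq_fourier_sum_of_fourierCoeff_eq_zero hF hs
  have hpoly_zero := (analyticOnNhd_fourier_sum T _ s).eq_zero_of_ae_restrict_eq_zero hS <| by
    filter_upwards [ae_restrict_of_ae_restrict_of_subset hS_sub hpoly, hFS] with x hx hx_zero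
    rw [← hx, hx_zero]
  filter_upwards [hpoly] with x hx
  rw [hx]
  exact congrFun hpoly_zero x

theorem fourierCoeff_liftIoc_eq_sample {h : ℝ → ℝ}
    (hF : ∀ᵐ x, x ∉ Ioc a (a + T) → F x = 0)
    (hFh : ∀ t : ℝ, (h t : ℂ) =
      (1 / (2 * π)) * ∫ ω : ℝ, F ω * Complex.exp (Complex.I * ω * t)) (n : ℤ) :
    fourierCoeff (AddCircle.liftIoc T a F) n = (2 * π / T : ℝ) * h (-n * (2 * π / T)) := by
  have hT : 0 < T := Fact.out
  have hsample : ∫ x : ℝ, fourier (-n) (x : AddCircle T) • F x = 2 * π * h (-n * (2 * π / T)) := by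
    rw [hFh, ← mul_assoc, mul_one_div_cancel (by simp [Real.pi_ne_zero]), one_mul]
    congr 1 with x
    rw [smul_eq_mul, fourier_coe_apply, mul_comm]
    congr 2
    push_cast
    field_simp
  rw [fourierCoeff_liftIoc_eq, fourierCoeffOn_eq_integral, add_sub_cancel_left,
    intervalIntegral.integral_of_le (by linarith),
    setIntegral_eq_integral_of_ae_compl_eq_zero
      (hF.mono fun x hx hx_out => by rw [hx hx_out, smul_zero]), hsample, Complex.real_smul]
  push_cast
  field_simp

end FourierSeries

theorem ae_eq_zero_of_samples_finitely_supported {ωm Ts : ℝ} (hωm : 0 < ωm) (hTs : 0 < Ts)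
    (hNyq : Ts < π / ωm) {h : ℝ → ℝ} {F : ℝ → ℂ} (hF2 : MemLp F 2 volume)
    (hF_out : ∀ᵐ ω, ω ∉ Icc (-ωm) ωm → F ω = 0)
    (hFh : ∀ t : ℝ, (h t : ℂ) =
      (1 / (2 * π)) * ∫ ω : ℝ, F ω * Complex.exp (Complex.I * ω * t))
    {N : ℕ} (hsupp : ∀ n : ℤ, (N : ℤ) < |n| → h (n * Ts) = 0) :
    ∀ᵐ ω, F ω = 0 := by
  set T := 2 * π / Ts
  have : Fact (0 < T) := ⟨by positivity⟩
  have hspacing : 2 * π / T = Ts := by simp only [T]; field_simp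
  have hωmT : ωm < T / 2 := by
    have : T / 2 = π / Ts := by ring
    rw [this, lt_div_iff₀ hTs, mul_comm]
    exact (lt_div_iff₀ hωm).mp hNyq
  have hperiod : Ioc (-(T / 2)) (-(T / 2) + T) = Ioc (-(T / 2)) (T / 2) := by ring_nf
  have hF_period : ∀ᵐ x, x ∉ Ioc (-(T / 2)) (-(T / 2) + T) → F x = 0 :=
    hF_out.mono fun x hx hx_out => hx fun hmem =>
      hx_out (hperiod ▸ ⟨by linarith [hmem.1], by linarith [hmem.2]⟩)
  have hcoeff : ∀ n ∉ Finset.Icc (-(N : ℤ)) N,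
      fourierCoeff (AddCircle.liftIoc T (-(T / 2)) F) n = 0 := by
    intro n hn
    rw [fourierCoeff_liftIoc_eq_sample hF_period hFh, hspacing, ← Int.cast_neg,
      hsupp (-n) (by rw [Finset.mem_Icc] at hn; rw [abs_neg, lt_abs]; omega),
      Complex.ofReal_zero, mul_zero]
  have hF_gap : ∀ᵐ x ∂volume.restrict (Ioc ωm (T / 2)), F x = 0 :=
    (ae_restrict_iff' measurableSet_Ioc).mpr <|
      hF_out.mono fun x hx hmem => hx fun hIcc => (hmem.1.trans_le hIcc.2).false
  have hF_zero_period := ae_restrict_eq_zero_of_fourierCoeff_eq_zero (hF2.restrict _) hcoeff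
    (hperiod ▸ Ioc_subset_Ioc (by linarith) le_rfl) (by simpa using hωmT) hF_gap
  exact ae_of_ae_restrict_of_ae_restrict_compl _ hF_zero_period
    ((ae_restrict_iff' measurableSet_Ioc.compl).mpr hF_period)

theorem bandlimited_zero_of_samples_finitely_supported
    (ωm Ts : ℝ) (hωm : 0 < ωm) (hTs : 0 < Ts) (hNyq : Ts < Real.pi / ωm)
    (h : ℝ → ℝ) (hbl : IsBandlimited ωm h)
    (N : ℕ) (hsupp : ∀ n : ℤ, (N : ℤ) < |n| → h (n * Ts) = 0) :
    ∀ t : ℝ, h t = 0 := by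
  obtain ⟨F, hF2, hF_out, hFh⟩ := hbl
  have hF_zero := ae_eq_zero_of_samples_finitely_supported hωm hTs hNyq hF2 hF_out hFh hsupp
  intro t
  have hint : ∫ ω : ℝ, F ω * Complex.exp (Complex.I * ω * t) = 0 :=
    integral_eq_zero_of_ae (hF_zero.mono fun ω hω => by simp [hω])
  have hht := hFh t
  rw [hint, mul_zero] at hht
  exact_mod_cast hht
end

section
/- Let ω_m > 0, let 0 < T_s < π/ω_m, and let f be ω_m-bandlimited with finite energy whose samples are absolutely summable, i.e. Σ_{n∈ℤ} |f(n T_s)| < ∞. Then for every real ω with ω_m < |ω| < π/T_s, the discrete-time Fourier transform of the samples vanishes: Σ_{n∈ℤ} f(n T_s) e^{-i n T_s ω} = 0. -/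
open MeasureTheory Complex Filter Set
open scoped Real Topology FourierTransform

/-!
Write `z(x) = e^{i T_s x}`. After shifting the frequency by `ω`, the DTFT terms are the Fourier
coefficients `∫ H(x) z(x)^n dx` of `H = F(· + ω)`, which vanishes off an interval on which
`z ≠ 1` because `0 < |T_s x| < 2π` there. So `G = H / (1 - z)` is integrable and
`∫ H z^n = c_n - c_{n+1}` with `c_n = ∫ G z^n`; the series telescopes, and `c_n → 0` as
`|n| → ∞` by the Riemann–Lebesgue lemma.
-/

theorem exp_mul_I_ne_one {θ : ℝ} (h0 : θ ≠ 0) (h : |θ| < 2 * π) : exp (θ * I) ≠ 1 := by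
  rw [Ne, exp_eq_one_iff]
  rintro ⟨n, hn⟩
  have hθ : θ = n * (2 * π) := by simpa using congrArg im hn
  have hn1 : |(n : ℝ)| < 1 := by
    rw [hθ, abs_mul, abs_of_pos Real.two_pi_pos] at h
    nlinarith [Real.two_pi_pos]
  have hn0 : n = 0 := Int.abs_lt_one_iff.mp (by exact_mod_cast hn1)
  exact h0 (by simp [hθ, hn0])

theorem MeasureTheory.MemLp.integrable_of_ae_eq_zero_off {X E : Type*} [MeasurableSpace X]
    [NormedAddCommGroup E] {μ : Measure X} {f : X → E} {p : ENNReal} {s : Set X}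
    (hf : MemLp f p μ) (hp : 1 ≤ p) (hs : μ s ≠ ⊤) (h0 : ∀ᵐ x ∂μ, x ∉ s → f x = 0) :
    Integrable f μ :=
  have : IsFiniteMeasure (μ.restrict s) := isFiniteMeasure_restrict.mpr hs
  IntegrableOn.integrable_of_ae_notMem_eq_zero ((hf.restrict s).integrable hp) h0

theorem MeasureTheory.Integrable.div_of_ae_eq_zero_off {X 𝕜 : Type*} [MeasurableSpace X]
    [TopologicalSpace X] [OpensMeasurableSpace X] [T2Space X] [NormedField 𝕜]
    [SecondCountableTopologyEither X 𝕜] {μ : Measure X} {f g : X → 𝕜} {K : Set X}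
    (hf : Integrable f μ) (hK : IsCompact K) (hg : ContinuousOn g K) (hg0 : ∀ x ∈ K, g x ≠ 0)
    (hfK : ∀ᵐ x ∂μ, x ∉ K → f x = 0) : Integrable (fun x => f x / g x) μ := by
  simp_rw [div_eq_mul_inv]
  refine (hf.integrableOn.mul_continuousOn (hg.inv₀ hg0) hK).integrable_of_ae_notMem_eq_zero ?_
  filter_upwards [hfK] with x hx hxK
  simp [Pi.inv_apply, hx hxK]

theorem MeasureTheory.Integrable.mul_exp_ofReal_mul_I {G : ℝ → ℂ} (hG : Integrable G)
    {φ : ℝ → ℝ} (hφ : Continuous φ) : Integrable (fun x => G x * exp (φ x * I)) :=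
  hG.mul_bdd (by fun_prop) (c := 1) (.of_forall fun x => by rw [norm_exp_ofReal_mul_I])

theorem tendsto_integral_mul_exp_mul_I_cocompact (G : ℝ → ℂ) :
    Tendsto (fun t : ℝ => ∫ x, G x * exp (t * x * I)) (cocompact ℝ) (𝓝 0) := by
  -- The Fourier kernel `𝐞 (-(x * w))` is `e^{-2π i x w}`: substitute `w = -t / (2π)`.
  have hc : -(2 * π)⁻¹ ≠ 0 := by simp [Real.pi_ne_zero]
  refine ((Real.tendsto_integral_exp_smul_cocompact G).comp
    (tendsto_cocompact_mul_left₀ hc)).congr fun t => integral_congr_ae (.of_forall fun x => ?_)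
  simp only [Circle.smul_def, Real.fourierChar_apply, smul_eq_mul]
  rw [mul_comm]
  congr 2
  field_simp
  push_cast
  ring

theorem tsum_sub_int_eq_zero {E : Type*} [AddCommGroup E] [TopologicalSpace E]
    [IsTopologicalAddGroup E] [T2Space E] {c : ℤ → E} (hc : Tendsto c cofinite (𝓝 0))
    (hs : Summable fun n => c n - c (n + 1)) : ∑' n, (c n - c (n + 1)) = 0 := by
  rw [← tsum_eq_of_summable_unconditional (L := SummationFilter.symmetricIco ℤ) hs]
  refine HasSum.tsum_eq (SummationFilter.hasSum_symmetricIco_int_iff.mpr ?_)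
  simp_rw [Finset.sum_Ico_int_sub]
  rw [Int.cofinite_eq, tendsto_sup] at hc
  simpa using (hc.1.comp (tendsto_neg_atTop_atBot.comp tendsto_natCast_atTop_atTop)).sub
    (hc.2.comp tendsto_natCast_atTop_atTop)

theorem tsum_integral_mul_exp_int_mul_eq_zero {H : ℝ → ℂ} {K : Set ℝ} {T : ℝ} (hT : T ≠ 0)
    (hH : Integrable H) (hK : IsCompact K) (hHK : ∀ᵐ x, x ∉ K → H x = 0)
    (hne : ∀ x ∈ K, exp (T * x * I) ≠ 1)
    (hs : Summable fun n : ℤ => ∫ x, H x * exp (n * T * x * I)) :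
    ∑' n : ℤ, ∫ x, H x * exp (n * T * x * I) = 0 := by
  set G : ℝ → ℂ := fun x => H x / (1 - exp (T * x * I))
  have hG : Integrable G := hH.div_of_ae_eq_zero_off hK (by fun_prop)
    (fun x hx => sub_ne_zero.mpr (hne x hx).symm) hHK
  set c : ℤ → ℂ := fun n => ∫ x, G x * exp (n * T * x * I)
  have hc : Tendsto c cofinite (𝓝 0) := by
    refine ((tendsto_integral_mul_exp_mul_I_cocompact G).comp
      ((tendsto_cocompact_mul_right₀ hT).comp Int.tendsto_coe_cofinite)).congr fun n => ?_
    simp [c]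
  -- `H = G * (1 - e^{iTx})` a.e., so the `n`-th term is `c n - c (n + 1)`.
  have hterm : ∀ n : ℤ, ∫ x, H x * exp (n * T * x * I) = c n - c (n + 1) := by
    intro n
    have hint : ∀ m : ℤ, Integrable fun x => G x * exp (m * T * x * I) := fun m => by
      simpa using hG.mul_exp_ofReal_mul_I (φ := fun x => m * T * x) (by fun_prop)
    rw [← integral_sub (hint n) (hint (n + 1))]
    refine integral_congr_ae ?_
    filter_upwards [hHK] with x hx
    by_cases hxK : x ∈ K
    · have h1 : 1 - exp (T * x * I) ≠ 0 := sub_ne_zero.mpr (hne x hxK).symm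
      have hsplit : exp ((n + 1 : ℤ) * T * x * I) = exp (n * T * x * I) * exp (T * x * I) := by
        rw [← exp_add]; congr 1; push_cast; ring
      simp only [G, hsplit]
      field_simp
    · simp [G, hx hxK]
  simp_rw [hterm] at hs ⊢
  exact tsum_sub_int_eq_zero hc hs

theorem exp_mul_mul_I_ne_one_of_abs_add_le {a T ω x : ℝ} (hT : 0 < T)
    (ha : a < |ω|) (hω : |ω| < π / T) (hx : |x + ω| ≤ a) : exp (T * x * I) ≠ 1 := by
  have hx0 : x ≠ 0 := by rintro rfl; rw [zero_add] at hx; linarith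
  have hxlt : |x| < 2 * π / T :=
    calc |x| = |(x + ω) - ω| := by rw [add_sub_cancel_right]
      _ ≤ |x + ω| + |ω| := abs_sub _ _
      _ < π / T + π / T := by linarith
      _ = 2 * π / T := by ring
  have := exp_mul_I_ne_one (θ := T * x) (mul_ne_zero hT.ne' hx0)
    (by rwa [abs_mul, abs_of_pos hT, ← lt_div_iff₀' hT])
  simpa using this

theorem dtft_vanishes_out_of_band_general
    (ωm Ts : ℝ) (hTs : 0 < Ts)
    (f : ℝ → ℝ) (hf : IsBandlimited ωm f)
    (hsum : Summable (fun n : ℤ => |f (n * Ts)|)) :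
    ∀ ω : ℝ, ωm < |ω| → |ω| < Real.pi / Ts →
      ∑' n : ℤ, (f (n * Ts) : ℂ) *
        Complex.exp (-Complex.I * (n : ℂ) * (Ts : ℂ) * (ω : ℂ)) = 0 := by
  intro ω hω hωTs
  obtain ⟨F, hF2, hFsupp, hFrep⟩ := hf
  have hF : Integrable F :=
    hF2.integrable_of_ae_eq_zero_off one_le_two measure_Icc_lt_top.ne hFsupp
  have hterm : ∀ n : ℤ, (f (n * Ts) : ℂ) * exp (-I * n * Ts * ω) =
      1 / (2 * π) * ∫ x, F (x + ω) * exp (n * Ts * x * I) := by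
    intro n
    rw [hFrep, mul_assoc, ← integral_mul_const, ← integral_add_right_eq_self _ ω]
    congr 1
    refine integral_congr_ae (.of_forall fun x => ?_)
    dsimp only
    rw [mul_assoc, ← exp_add]
    congr 2
    push_cast
    ring
  have hHK : ∀ᵐ x, x ∉ Icc (-ωm - ω) (ωm - ω) → F (x + ω) = 0 := by
    filter_upwards [(measurePreserving_add_right volume ω).quasiMeasurePreserving.ae hFsupp]
      with x hx hxK
    exact hx fun ⟨h1, h2⟩ => hxK ⟨by linarith, by linarith⟩
  have hne : ∀ x ∈ Icc (-ωm - ω) (ωm - ω), exp (Ts * x * I) ≠ 1 := fun x ⟨h1, h2⟩ =>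
    exp_mul_mul_I_ne_one_of_abs_add_le hTs hω hωTs (abs_le.mpr ⟨by linarith, by linarith⟩)
  have hs : Summable fun n : ℤ => ∫ x, F (x + ω) * exp (n * Ts * x * I) := by
    have : Summable fun n : ℤ => (f (n * Ts) : ℂ) * exp (-I * n * Ts * ω) :=
      .of_norm (hsum.congr fun n => by simp [Complex.norm_exp])
    simp_rw [hterm] at this
    exact (summable_mul_left_iff (by simp [Real.pi_ne_zero])).mp this
  simp_rw [hterm, tsum_mul_left, tsum_integral_mul_exp_int_mul_eq_zero hTs.ne'
    (hF.comp_add_right ω) isCompact_Icc hHK hne hs, mul_zero]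

theorem dtft_vanishes_out_of_band
    (ωm Ts : ℝ) (hωm : 0 < ωm) (hTs : 0 < Ts) (hNyq : Ts < Real.pi / ωm)
    (f : ℝ → ℝ) (hf : IsBandlimited ωm f)
    (hsum : Summable (fun n : ℤ => |f (n * Ts)|)) :
    ∀ ω : ℝ, ωm < |ω| → |ω| < Real.pi / Ts →
      ∑' n : ℤ, (f (n * Ts) : ℂ) *
        Complex.exp (-Complex.I * (n : ℂ) * (Ts : ℂ) * (ω : ℂ)) = 0 :=
  dtft_vanishes_out_of_band_general ωm Ts hTs f hf hsum
end
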